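/- arXiv:cs/0510061 — 4 statements merged into one kernel-verified Lean document; each statement's English description precedes it below -/
import Mathlib

section
/- Let P be a propositional general logic program and let P+ be the positive program obtained from P by deleting all negative body literals from every rule. Then every atom that does not belong to the least Herbrand model of P+ is false in the well-founded model of P. -/
/-! ## Propositional general logic programs and the well-founded semantics -/

/-- A rule of a propositional general logic program over atoms `α`:
a head atom, a finite set of positive body atoms and a finite set of
negative body atoms. -/
structure Rule (α : Type*) where
  head : α
  pos : Finset α
  neg : Finset α

/-- Derivability in the reduct of the program `P` with respect to the set `I`
of atoms assumed true: an atom is derivable if some rule of `P` has it as head,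
all negative body atoms avoid `I`, and all positive body atoms are derivable. -/
inductive GammaDer {α : Type*} (P : Set (Rule α)) (I : Set α) : α → Prop
  | step (r : Rule α) (hr : r ∈ P) (hneg : ∀ b ∈ r.neg, b ∉ I)
      (hpos : ∀ b ∈ r.pos, GammaDer P I b) : GammaDer P I r.head

/-- The Gelfond–Lifschitz operator `Γ_P`. -/
def gamma {α : Type*} (P : Set (Rule α)) (I : Set α) : Set α := { a | GammaDer P I a }

theorem gamma_antitone {α : Type*} (P : Set (Rule α)) : Antitone (gamma P) := by
  intro I J hIJ a ha
  induction ha with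
  | step r hr hneg hpos ih =>
      exact GammaDer.step r hr (fun b hb hbI => hneg b hb (hIJ hbI)) ih

/-- The (monotone) square `Γ_P ∘ Γ_P` of the Gelfond–Lifschitz operator. -/
def gammaSq {α : Type*} (P : Set (Rule α)) : Set α →o Set α :=
  ⟨fun I => gamma P (gamma P I), fun _ _ h => gamma_antitone P (gamma_antitone P h)⟩

/-- The atoms true in the well-founded model of `P`
(the least fixed point of `Γ_P ∘ Γ_P`). -/
def wfTrue {α : Type*} (P : Set (Rule α)) : Set α := OrderHom.lfp (gammaSq P)

/-- The atoms false in the well-founded model of `P`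
(the complement of the greatest fixed point `Γ_P(lfp (Γ_P ∘ Γ_P))` of `Γ_P ∘ Γ_P`;
these are exactly the atoms belonging to an unfounded set). -/
def wfFalse {α : Type*} (P : Set (Rule α)) : Set α := (gamma P (wfTrue P))ᶜ

/-- The atoms undefined in the well-founded model of `P`. -/
def wfUndef {α : Type*} (P : Set (Rule α)) : Set α := (wfTrue P ∪ wfFalse P)ᶜ

/-- Derivability in a negation-free program: rules whose negative body is
nonempty are never applicable. -/
inductive LHDer {α : Type*} (P : Set (Rule α)) : α → Prop
  | step (r : Rule α) (hr : r ∈ P) (hneg : r.neg = ∅)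
      (hpos : ∀ b ∈ r.pos, LHDer P b) : LHDer P r.head

/-- The least Herbrand model of a negation-free program: the set of atoms
derivable from the rules (i.e. the least fixed point of its
immediate-consequence operator). -/
def leastModel {α : Type*} (P : Set (Rule α)) : Set α := { a | LHDer P a }

/-- The positive program `P⁺` obtained from `P` by deleting all negative body
literals from every rule. -/
def posProgram {α : Type*} (P : Set (Rule α)) : Set (Rule α) :=
  (fun r => ⟨r.head, r.pos, ∅⟩) '' P

theorem LHDer_pos_of_GammaDer {α : Type*} {P : Set (Rule α)} {I : Set α} {a : α}
    (h : GammaDer P I a) : LHDer (posProgram P) a := by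
  induction h with
  | step r hr hneg hpos ih =>
      exact LHDer.step ⟨r.head, r.pos, ∅⟩ ⟨r, hr, rfl⟩ rfl ih

/-- every atom not in the least Herbrand model of `P⁺` is false in
the well-founded model of `P`. -/
theorem wfFalse_of_not_mem_leastModel_posProgram {α : Type*} (P : Set (Rule α))
    (a : α) (ha : a ∉ leastModel (posProgram P)) : a ∈ wfFalse P := by
  intro hmem
  exact ha (LHDer_pos_of_GammaDer hmem)
end

section
/- For any RT⊖ policy P and any role A.r: if the atom r(A,B) is true in the well-founded model of the semantic program SP(P), then r(A,B) is true in the well-founded model of the semantic program SP(P+), where P+ is the context policy of P. -/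
/-! ## RT⊖ policies and their semantic programs -/

/-- An RT⊖ credential over entities `E` and role names `R`. -/
inductive Credential (E R : Type*) where
  /-- Simple membership `A.r ← D`. -/
  | member (A : E) (r : R) (D : E)
  /-- Simple inclusion `A.r ← B.r1`. -/
  | incl (A : E) (r : R) (B : E) (r1 : R)
  /-- Linking inclusion `A.r ← A.r1.r2`. -/
  | link (A : E) (r r1 r2 : R)
  /-- Intersection inclusion `A.r ← B1.r1 ∩ B2.r2`. -/
  | inter (A : E) (r : R) (B1 : E) (r1 : R) (B2 : E) (r2 : R)
  /-- Exclusion `A.r ← B1.r1 ⊖ B2.r2`. -/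
  | exclusion (A : E) (r : R) (B1 : E) (r1 : R) (B2 : E) (r2 : R)

variable {E R : Type*}

/-- The clauses of the semantic program corresponding to a single credential.
An atom `r(A,B)` is represented as the triple `(r, A, B)`. -/
def clausesOf [DecidableEq E] [DecidableEq R] : Credential E R → Set (Rule (R × E × E))
  | .member A r D => {⟨(r, A, D), ∅, ∅⟩}
  | .incl A r B r1 => { rl | ∃ Z, rl = ⟨(r, A, Z), {(r1, B, Z)}, ∅⟩ }
  | .link A r r1 r2 => { rl | ∃ Y Z, rl = ⟨(r, A, Z), {(r1, A, Y), (r2, Y, Z)}, ∅⟩ }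
  | .inter A r B1 r1 B2 r2 => { rl | ∃ Z, rl = ⟨(r, A, Z), {(r1, B1, Z), (r2, B2, Z)}, ∅⟩ }
  | .exclusion A r B1 r1 B2 r2 => { rl | ∃ Z, rl = ⟨(r, A, Z), {(r1, B1, Z)}, {(r2, B2, Z)}⟩ }

/-- The semantic program `SP(P)` of an RT⊖ policy `P`. -/
def SP [DecidableEq E] [DecidableEq R] (P : Set (Credential E R)) :
    Set (Rule (R × E × E)) := ⋃ c ∈ P, clausesOf c

/-- The semantics `⟦A.r⟧_P` of the role `A.r`: the set of entities `Z` such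
that the atom `r(A,Z)` is true in the well-founded model of `SP(P)`. -/
def roleSem [DecidableEq E] [DecidableEq R] (P : Set (Credential E R)) (A : E) (r : R) :
    Set E := { Z | (r, A, Z) ∈ wfTrue (SP P) }

/-- Replacing an exclusion credential `A.r ← B1.r1 ⊖ B2.r2` by the simple
inclusion `A.r ← B1.r1`; other credentials are unchanged. -/
def contextCred : Credential E R → Credential E R
  | .exclusion A r B1 r1 _ _ => .incl A r B1 r1
  | c => c

/-- The context policy `P+` of an RT⊖ policy `P`. -/
def contextPolicy (P : Set (Credential E R)) : Set (Credential E R) := contextCred '' P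

/-- A credential is an RT0 credential if it is not an exclusion credential. -/
def isRT0 : Credential E R → Prop
  | .exclusion _ _ _ _ _ _ => False
  | _ => True

lemma strip_mem_context {E R : Type*} [DecidableEq E] [DecidableEq R]
    (P : Set (Credential E R)) {rl : Rule (R × E × E)} (h : rl ∈ SP P) :
    (⟨rl.head, rl.pos, ∅⟩ : Rule (R × E × E)) ∈ SP (contextPolicy P) := by
  rcases Set.mem_iUnion₂.mp h with ⟨c, hc, hrl⟩
  apply Set.mem_iUnion₂.mpr
  refine ⟨contextCred c, ⟨c, hc, rfl⟩, ?_⟩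
  cases c with
  | member A r D =>
      simp only [clausesOf, Set.mem_singleton_iff] at hrl
      subst hrl; simp [contextCred, clausesOf]
  | incl A r B r1 =>
      obtain ⟨Z, hZ⟩ := hrl
      subst hZ; exact ⟨Z, rfl⟩
  | link A r r1 r2 =>
      obtain ⟨Y, Z, hZ⟩ := hrl
      subst hZ; exact ⟨Y, Z, rfl⟩
  | inter A r B1 r1 B2 r2 =>
      obtain ⟨Z, hZ⟩ := hrl
      subst hZ; exact ⟨Z, rfl⟩
  | exclusion A r B1 r1 B2 r2 =>
      obtain ⟨Z, hZ⟩ := hrl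
      subst hZ; exact ⟨Z, rfl⟩

lemma gammaDer_context {E R : Type*} [DecidableEq E] [DecidableEq R]
    (P : Set (Credential E R)) (I J : Set (R × E × E)) {a : R × E × E}
    (h : GammaDer (SP P) I a) : GammaDer (SP (contextPolicy P)) J a := by
  induction h with
  | step rl hr hneg hpos ih =>
      exact GammaDer.step ⟨rl.head, rl.pos, ∅⟩ (strip_mem_context P hr)
        (by intro b hb; simp at hb) ih

/-- if `r(A,B)` is true in the well-founded model of `SP(P)`,
then it is true in the well-founded model of `SP(P+)`. -/
theorem wfTrue_SP_subset_context {E R : Type*} [DecidableEq E] [DecidableEq R]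
    (P : Set (Credential E R)) (hP : P.Finite) (A : E) (r : R) (B : E)
    (h : (r, A, B) ∈ wfTrue (SP P)) :
    (r, A, B) ∈ wfTrue (SP (contextPolicy P)) := by
  have key : wfTrue (SP P) ⊆ wfTrue (SP (contextPolicy P)) := by
    apply OrderHom.lfp_le
    intro a ha
    have : GammaDer (SP (contextPolicy P))
        (gamma (SP (contextPolicy P)) (wfTrue (SP (contextPolicy P)))) a :=
      gammaDer_context P _ _ ha
    have h2 : a ∈ gammaSq (SP (contextPolicy P)) (wfTrue (SP (contextPolicy P))) := this
    rwa [wfTrue, OrderHom.map_lfp] at h2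
  exact key h
end

section
/- For any RT⊖ policy P and any role A.r: if the atom r(A,B) is not true in the well-founded model of the semantic program SP(P+) (where P+ is the context policy of P), then r(A,B) is false in the well-founded model of SP(P). -/
variable {E R : Type*}

/-- Every rule of `SP(P)` has a counterpart in `SP(P+)` with the same head
and positive body but empty negative body. -/
lemma exists_context_rule {E R : Type*} [DecidableEq E] [DecidableEq R]
    (P : Set (Credential E R)) {rl : Rule (R × E × E)} (hrl : rl ∈ SP P) :
    (⟨rl.head, rl.pos, ∅⟩ : Rule (R × E × E)) ∈ SP (contextPolicy P) := by
  simp only [SP, Set.mem_iUnion] at hrl ⊢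
  obtain ⟨c, hc, hr⟩ := hrl
  refine ⟨contextCred c, ⟨c, hc, rfl⟩, ?_⟩
  cases c with
  | member A r D => simp_all [clausesOf, contextCred]
  | incl A r B r1 =>
      obtain ⟨Z, hZ⟩ := hr; subst hZ; exact ⟨Z, rfl⟩
  | link A r r1 r2 =>
      obtain ⟨Y, Z, hZ⟩ := hr; subst hZ; exact ⟨Y, Z, rfl⟩
  | inter A r B1 r1 B2 r2 =>
      obtain ⟨Z, hZ⟩ := hr; subst hZ; exact ⟨Z, rfl⟩
  | exclusion A r B1 r1 B2 r2 =>
      obtain ⟨Z, hZ⟩ := hr; subst hZ; exact ⟨Z, rfl⟩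

/-- if `r(A,B)` is not true in the well-founded model of `SP(P+)`,
then `r(A,B)` is false in the well-founded model of `SP(P)`. -/
theorem wfFalse_of_not_mem_context {E R : Type*} [DecidableEq E] [DecidableEq R]
    (P : Set (Credential E R)) (hP : P.Finite) (A : E) (r : R) (B : E)
    (h : (r, A, B) ∉ wfTrue (SP (contextPolicy P))) :
    (r, A, B) ∈ wfFalse (SP P) := by
  intro hmem
  apply h
  have hder : GammaDer (SP P) (wfTrue (SP P)) (r, A, B) := hmem
  have h2 : GammaDer (SP (contextPolicy P))
      (gamma (SP (contextPolicy P)) (wfTrue (SP (contextPolicy P)))) (r, A, B) :=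
    gammaDer_context P _ _ hder
  have hfix : gammaSq (SP (contextPolicy P)) (wfTrue (SP (contextPolicy P)))
      = wfTrue (SP (contextPolicy P)) := OrderHom.map_lfp _
  have : (r, A, B) ∈ gammaSq (SP (contextPolicy P)) (wfTrue (SP (contextPolicy P))) := h2
  rwa [hfix] at this
end

section
/- For a negation-free propositional general logic program P (every rule has an empty set of negative body literals), the well-founded model of P is two-valued and coincides with the least Herbrand model of P: an atom is true in the well-founded model of P if and only if it belongs to the least Herbrand model of P, and it is false in the well-founded model otherwise; no atom is undefined. -/

lemma gamma_eq_leastModel {α : Type*} (P : Set (Rule α)) (h : ∀ r ∈ P, r.neg = ∅)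
    (I : Set α) : gamma P I = leastModel P := by
  ext a
  constructor
  · intro ha
    induction ha with
    | step r hr hneg hpos ih => exact LHDer.step r hr (h r hr) ih
  · intro ha
    induction ha with
    | step r hr hneg hpos ih =>
        exact GammaDer.step r hr (fun b hb => by simp [hneg] at hb) ih

/-- for a negation-free program the well-founded model is
two-valued and coincides with the least Herbrand model. -/
theorem wf_negation_free {α : Type*} (P : Set (Rule α)) (h : ∀ r ∈ P, r.neg = ∅) :
    (∀ a : α, a ∈ wfTrue P ↔ a ∈ leastModel P) ∧
    (∀ a : α, a ∈ wfFalse P ↔ a ∉ leastModel P) ∧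
    wfUndef P = ∅ := by
  have hfix : wfTrue P = leastModel P := by
    have := OrderHom.map_lfp (gammaSq P)
    rw [wfTrue, ← this]
    show gamma P (gamma P _) = _
    rw [gamma_eq_leastModel P h]
  have hg : gamma P (wfTrue P) = leastModel P := gamma_eq_leastModel P h _
  refine ⟨fun a => by rw [hfix], fun a => by
    simp [wfFalse, hg], ?_⟩
  ext a
  simp only [wfUndef, wfFalse, hg]
  simp [hfix]
end
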